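/- Let $G_1, \ldots, G_l$ ($l \ge 1$) be edge-disjoint subgraphs of a graph $G$ on $n$ vertices with $E(G) = \bigcup_{i=1}^l E(G_i)$. For $\frac{1}{2} \le \alpha < 1$ and $1 \le k \le n$, the sum of the $k$ largest $A_\alpha$-eigenvalues of $G$ is at most the sum over $i$ of the sums of the $k$ largest $A_\alpha$-eigenvalues of $G_i$ (where if $G_i$ has fewer than $k$ vertices, all its eigenvalues are summed). -/

import Mathlib

open Finset

/-- `μ` is a decreasing enumeration of the eigenvalues of the real symmetric
matrix `M`. -/
def IsSortedEigs {p : ℕ} (M : Matrix (Fin p) (Fin p) ℝ) (hM : M.IsHermitian)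
    (μ : Fin p → ℝ) : Prop :=
  Antitone μ ∧ ∃ σ : Equiv.Perm (Fin p), μ = hM.eigenvalues ∘ σ

/-!
Since the adjacency matrix and the degrees are additive over a partition of the edge set,
`A_α(G) = ∑ᵢ A_α(Gᵢ)`. Take orthonormal eigenvectors `v₁, …, v_k` of `A_α(G)` for its `k`
largest eigenvalues, so that the left-hand side is `∑ᵢ ∑ⱼ ⟪vⱼ, A_α(Gᵢ) vⱼ⟫`, and bound each
inner sum by Ky Fan's inequality: for a symmetric `A` with orthonormal eigenbasis `(bₐ)`,
`∑ⱼ ⟪vⱼ, A vⱼ⟫ = ∑ₐ λₐ tₐ` with `tₐ = ∑ⱼ ⟪vⱼ, bₐ⟫²`. These weights lie in `[0, 1]` (Bessel)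
and sum to the number of the `vⱼ` (Parseval), and such a weighted sum of the `λₐ` is at most
the sum of the largest ones.
-/

theorem sum_mul_le_sum_of_weights_le_one {ι : Type*} [Fintype ι] [DecidableEq ι]
    (μ s : ι → ℝ) (S : Finset ι) (hμ : ∀ a ∈ S, ∀ b ∉ S, μ b ≤ μ a)
    (hs0 : ∀ a, 0 ≤ s a) (hs1 : ∀ a, s a ≤ 1) (hsum : ∑ a, s a = #S) :
    ∑ a, μ a * s a ≤ ∑ a ∈ S, μ a := by
  obtain ⟨c, hcS, hcSc⟩ : ∃ c, (∀ a ∈ S, c ≤ μ a) ∧ ∀ b ∉ S, μ b ≤ c := by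
    rcases S.eq_empty_or_nonempty with rfl | hS
    · obtain ⟨c, hc⟩ := (Set.finite_range μ).bddAbove
      exact ⟨c, by simp, fun b _ => hc ⟨b, rfl⟩⟩
    · exact ⟨S.inf' hS μ, fun a ha => inf'_le μ ha,
        fun b hb => le_inf' hS μ fun a ha => hμ a ha b hb⟩
  have hpt : ∀ a, μ a * s a ≤ c * s a + if a ∈ S then μ a - c else 0 := by
    intro a
    split_ifs with ha
    · nlinarith [hcS a ha, hs1 a]
    · nlinarith [hcSc a ha, hs0 a]
  calc ∑ a, μ a * s a ≤ ∑ a, (c * s a + if a ∈ S then μ a - c else 0) :=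
        sum_le_sum fun a _ => hpt a
    _ = ∑ a ∈ S, μ a := by
      rw [sum_add_distrib, ← mul_sum, hsum, ← sum_filter, filter_mem_eq_inter, univ_inter,
        sum_sub_distrib, sum_const, nsmul_eq_mul]
      ring

open scoped RealInnerProductSpace

section KyFan

variable {E : Type*} [NormedAddCommGroup E] [InnerProductSpace ℝ E]
  {ι : Type*} [Fintype ι] {T : E →ₗ[ℝ] E} {b : OrthonormalBasis ι ℝ E} {eig : ι → ℝ}

theorem LinearMap.IsSymmetric.inner_map_self_eq_sum (hT : T.IsSymmetric)
    (hb : ∀ a, T (b a) = eig a • b a) (x : E) :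
    ⟪x, T x⟫ = ∑ a, eig a * ⟪b a, x⟫ ^ 2 := by
  rw [← b.sum_inner_mul_inner]
  refine sum_congr rfl fun a _ => ?_
  rw [← hT, hb, real_inner_smul_left, real_inner_comm x]
  ring

theorem LinearMap.IsSymmetric.sum_inner_map_self_le [DecidableEq ι] (hT : T.IsSymmetric)
    (hb : ∀ a, T (b a) = eig a • b a) {κ : Type*} {v : κ → E} (hv : Orthonormal ℝ v)
    (J : Finset κ) (S : Finset ι) (hcard : #S = #J) (hS : ∀ a ∈ S, ∀ c ∉ S, eig c ≤ eig a) :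
    ∑ j ∈ J, ⟪v j, T (v j)⟫ ≤ ∑ a ∈ S, eig a := by
  set t : ι → ℝ := fun a => ∑ j ∈ J, ⟪v j, b a⟫ ^ 2
  have ht0 : ∀ a, 0 ≤ t a := fun a => sum_nonneg fun j _ => sq_nonneg _
  have ht1 : ∀ a, t a ≤ 1 := fun a => by
    simpa [b.orthonormal.1 a] using hv.sum_inner_products_le (b a) (s := J)
  have htsum : ∑ a, t a = #S := by
    simp_rw [t]
    rw [sum_comm]
    simp [b.sum_sq_inner_left, hv.1, hcard]
  calc ∑ j ∈ J, ⟪v j, T (v j)⟫ = ∑ a, eig a * t a := by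
        simp_rw [hT.inner_map_self_eq_sum hb, t, mul_sum, real_inner_comm (v _)]
        exact sum_comm
    _ ≤ ∑ a ∈ S, eig a := sum_mul_le_sum_of_weights_le_one eig t S hS ht0 ht1 htsum

end KyFan

open Matrix

theorem Matrix.IsHermitian.toEuclideanLin_eigenvectorBasis {n : Type*} [Fintype n]
    [DecidableEq n] {A : Matrix n n ℝ} (hA : A.IsHermitian) (a : n) :
    toEuclideanLin A (hA.eigenvectorBasis a) = hA.eigenvalues a • hA.eigenvectorBasis a := by
  ext1
  simp [toLpLin_apply, hA.mulVec_eigenvectorBasis]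

theorem Matrix.IsHermitian.inner_eigenvectorBasis_toEuclideanLin {n : Type*} [Fintype n]
    [DecidableEq n] {A : Matrix n n ℝ} (hA : A.IsHermitian) (a : n) :
    ⟪hA.eigenvectorBasis a, toEuclideanLin A (hA.eigenvectorBasis a)⟫ = hA.eigenvalues a := by
  simp [hA.toEuclideanLin_eigenvectorBasis, real_inner_smul_right]

theorem IsSortedEigs.sum_inner_toEuclideanLin_le {p : ℕ} {M : Matrix (Fin p) (Fin p) ℝ}
    {hM : M.IsHermitian} {μ : Fin p → ℝ} (h : IsSortedEigs M hM μ) {κ : Type*}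
    {v : κ → EuclideanSpace ℝ (Fin p)} (hv : Orthonormal ℝ v) (J : Finset κ) (k : ℕ)
    (hJ : #J = #({j | (j : ℕ) < k} : Finset (Fin p))) :
    ∑ j ∈ J, ⟪v j, toEuclideanLin M (v j)⟫ ≤ ∑ j ∈ ({j | (j : ℕ) < k} : Finset (Fin p)), μ j := by
  obtain ⟨hanti, σ, rfl⟩ := h
  set I : Finset (Fin p) := {j | (j : ℕ) < k}
  have hdom : ∀ a ∈ I.map σ.toEmbedding, ∀ c ∉ I.map σ.toEmbedding,
      hM.eigenvalues c ≤ hM.eigenvalues a := by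
    simp only [I, mem_map_equiv, mem_filter_univ, not_lt]
    intro a ha c hc
    simpa using hanti (show σ.symm a ≤ σ.symm c by rw [Fin.le_def]; omega)
  simpa [sum_map] using (isSymmetric_toEuclideanLin_iff.mpr hM).sum_inner_map_self_le
    hM.toEuclideanLin_eigenvectorBasis hv J _ (by simp [hJ]) hdom

namespace SimpleGraph

variable {V ι : Type*} [Fintype ι] {G : SimpleGraph V} [DecidableRel G.Adj]
  {Gs : ι → SimpleGraph V} [∀ i, DecidableRel (Gs i).Adj]

theorem adjMatrix_eq_sum_of_pairwise_disjoint (R : Type*) [NonAssocSemiring R]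
    (hdisj : Pairwise fun i j => Disjoint (Gs i).edgeSet (Gs j).edgeSet)
    (hcover : ⋃ i, (Gs i).edgeSet = G.edgeSet) :
    G.adjMatrix R = ∑ i, (Gs i).adjMatrix R := by
  ext v w
  simp only [adjMatrix_apply, Matrix.sum_apply]
  by_cases hG : G.Adj v w
  · obtain ⟨i, hi⟩ := Set.mem_iUnion.mp (hcover ▸ hG : s(v, w) ∈ ⋃ i, (Gs i).edgeSet)
    have hother : ∀ j ≠ i, ¬ (Gs j).Adj v w := fun j hji hj =>
      Set.disjoint_left.mp (hdisj hji) hj hi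
    rw [if_pos hG, sum_eq_single i (fun j _ hji => if_neg (hother j hji)) (by simp),
      if_pos (show (Gs i).Adj v w from hi)]
  · have hnone : ∀ i, ¬ (Gs i).Adj v w := fun i hi =>
      hG (hcover ▸ Set.mem_iUnion.mpr ⟨i, hi⟩ : s(v, w) ∈ G.edgeSet)
    simp [hG, hnone]

variable [Fintype V]

theorem degree_eq_sum_of_pairwise_disjoint
    (hdisj : Pairwise fun i j => Disjoint (Gs i).edgeSet (Gs j).edgeSet)
    (hcover : ⋃ i, (Gs i).edgeSet = G.edgeSet) (v : V) :
    G.degree v = ∑ i, (Gs i).degree v := by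
  have h := congrFun (congrArg (· *ᵥ Function.const V 1)
    (adjMatrix_eq_sum_of_pairwise_disjoint ℕ hdisj hcover)) v
  simpa [Matrix.sum_mulVec] using h

variable [DecidableEq V]

noncomputable def aAlphaMatrix (α : ℝ) (G : SimpleGraph V) [DecidableRel G.Adj] : Matrix V V ℝ :=
  α • Matrix.diagonal (fun v => (G.degree v : ℝ)) + (1 - α) • G.adjMatrix ℝ

theorem aAlphaMatrix_eq_sum_of_pairwise_disjoint (α : ℝ)
    (hdisj : Pairwise fun i j => Disjoint (Gs i).edgeSet (Gs j).edgeSet)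
    (hcover : ⋃ i, (Gs i).edgeSet = G.edgeSet) :
    G.aAlphaMatrix α = ∑ i, (Gs i).aAlphaMatrix α := by
  have hdiag : Matrix.diagonal (fun v => (G.degree v : ℝ))
      = ∑ i, Matrix.diagonal (fun v => ((Gs i).degree v : ℝ)) := by
    ext a b
    by_cases hab : a = b <;>
      simp [Matrix.sum_apply, hab, degree_eq_sum_of_pairwise_disjoint hdisj hcover]
  simp only [aAlphaMatrix, sum_add_distrib, ← smul_sum, hdiag,
    adjMatrix_eq_sum_of_pairwise_disjoint ℝ hdisj hcover]

end SimpleGraph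

theorem sum_top_Aalpha_eigenvalues_subadditive_general {n l : ℕ}
    (G : SimpleGraph (Fin n)) [DecidableRel G.Adj]
    (Gs : Fin l → SimpleGraph (Fin n)) [inst : ∀ i, DecidableRel (Gs i).Adj]
    (hdisj : ∀ i j, i ≠ j → Disjoint (Gs i).edgeSet (Gs j).edgeSet)
    (hcover : (⋃ i, (Gs i).edgeSet) = G.edgeSet)
    (α : ℝ)
    (hH : (α • Matrix.diagonal (fun v => (G.degree v : ℝ))
        + (1 - α) • G.adjMatrix ℝ).IsHermitian)
    (hHs : ∀ i, (α • Matrix.diagonal (fun v => ((Gs i).degree v : ℝ))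
        + (1 - α) • (Gs i).adjMatrix ℝ).IsHermitian)
    (ρ : Fin n → ℝ)
    (hρ : IsSortedEigs (α • Matrix.diagonal (fun v => (G.degree v : ℝ))
        + (1 - α) • G.adjMatrix ℝ) hH ρ)
    (μ : Fin l → Fin n → ℝ)
    (hμ : ∀ i, IsSortedEigs (α • Matrix.diagonal (fun v => ((Gs i).degree v : ℝ))
        + (1 - α) • (Gs i).adjMatrix ℝ) (hHs i) (μ i))
    (k : ℕ) :
    ∑ j : Fin n, (if (j : ℕ) < k then ρ j else 0)
      ≤ ∑ i : Fin l, ∑ j : Fin n, (if (j : ℕ) < k then μ i j else 0) := by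
  obtain ⟨-, σ, rfl⟩ := hρ
  set I : Finset (Fin n) := {j | (j : ℕ) < k}
  set v := hH.eigenvectorBasis ∘ σ
  have hv : Orthonormal ℝ v := hH.eigenvectorBasis.orthonormal.comp σ σ.injective
  simp only [← sum_filter]
  calc ∑ j ∈ I, hH.eigenvalues (σ j)
      = ∑ j ∈ I, ⟪v j, toEuclideanLin (G.aAlphaMatrix α) (v j)⟫ :=
        sum_congr rfl fun j _ => (hH.inner_eigenvectorBasis_toEuclideanLin (σ j)).symm
    _ = ∑ i, ∑ j ∈ I, ⟪v j, toEuclideanLin ((Gs i).aAlphaMatrix α) (v j)⟫ := by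
        rw [SimpleGraph.aAlphaMatrix_eq_sum_of_pairwise_disjoint α (fun i j => hdisj i j) hcover]
        simp only [map_sum, LinearMap.sum_apply, inner_sum]
        exact sum_comm
    _ ≤ ∑ i, ∑ j ∈ I, μ i j :=
        sum_le_sum fun i _ => (hμ i).sum_inner_toEuclideanLin_le hv I k rfl

/-- If `G₁, …, G_l` (`l ≥ 1`) are edge-disjoint subgraphs of `G` whose edge sets
cover `E(G)`, then for `1/2 ≤ α < 1` and `1 ≤ k ≤ n`, the sum of the `k` largest
`A_α`-eigenvalues of `G` is at most the sum over `i` of the sums of the `k`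
largest `A_α`-eigenvalues of the `Gᵢ`. -/
theorem sum_top_Aalpha_eigenvalues_subadditive {n l : ℕ} (hl : 1 ≤ l)
    (G : SimpleGraph (Fin n)) [DecidableRel G.Adj]
    (Gs : Fin l → SimpleGraph (Fin n)) [inst : ∀ i, DecidableRel (Gs i).Adj]
    (hsub : ∀ i, Gs i ≤ G)
    (hdisj : ∀ i j, i ≠ j → Disjoint (Gs i).edgeSet (Gs j).edgeSet)
    (hcover : (⋃ i, (Gs i).edgeSet) = G.edgeSet)
    (α : ℝ) (hα0 : 1/2 ≤ α) (hα1 : α < 1)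
    (hH : (α • Matrix.diagonal (fun v => (G.degree v : ℝ))
        + (1 - α) • G.adjMatrix ℝ).IsHermitian)
    (hHs : ∀ i, (α • Matrix.diagonal (fun v => ((Gs i).degree v : ℝ))
        + (1 - α) • (Gs i).adjMatrix ℝ).IsHermitian)
    (ρ : Fin n → ℝ)
    (hρ : IsSortedEigs (α • Matrix.diagonal (fun v => (G.degree v : ℝ))
        + (1 - α) • G.adjMatrix ℝ) hH ρ)
    (μ : Fin l → Fin n → ℝ)
    (hμ : ∀ i, IsSortedEigs (α • Matrix.diagonal (fun v => ((Gs i).degree v : ℝ))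
        + (1 - α) • (Gs i).adjMatrix ℝ) (hHs i) (μ i))
    (k : ℕ) (hk1 : 1 ≤ k) (hkn : k ≤ n) :
    ∑ j : Fin n, (if (j : ℕ) < k then ρ j else 0)
      ≤ ∑ i : Fin l, ∑ j : Fin n, (if (j : ℕ) < k then μ i j else 0) :=
  sum_top_Aalpha_eigenvalues_subadditive_general G Gs (inst := inst) hdisj hcover α hH hHs ρ hρ μ hμ
    k
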